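/- Rayleigh quotient bound: if λ_at < 0 is the unique negative eigenvalue of D with eigenvector u = (u_r, u_c), C positive definite, and λ_cg is the smallest eigenvalue of D_cg, then λ_cg ≤ (u_r · D_cg u_r)/||u_r||² = λ_at + [u_r · B(u_min - u_c)]/||u_r||² ≤ λ_at, where u_min = -C^{-1} B^T u_r. -/

import Mathlib

/-!
Split the eigen-equation of `D` into blocks. The first row, `R u_r + B u_c = λ_at u_r`, gives
`D_cg u_r = λ_at u_r + B (u_min - u_c)`, which is the middle equality. The second row,
`Bᵀ u_r + C u_c = λ_at u_c`, gives `u_min - u_c = -λ_at C⁻¹ u_c`, hence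
`u_r ⬝ B (u_min - u_c) = λ_at ‖u_c‖² - λ_at² (u_c ⬝ C⁻¹ u_c) ≤ 0`. The first inequality is the
Rayleigh bound for the symmetric matrix `D_cg`: all eigenvalues of `D_cg - λ_cg I` are
nonnegative. Finally `u_r ≠ 0`, as otherwise `u_c` would be an eigenvector of the positive
definite `C` with the negative eigenvalue `λ_at`.
-/

open Matrix

namespace Matrix

variable {m n : Type*} [Fintype m] [Fintype n]

theorem fromBlocks_mulVec_sumElim_eq_smul_iff {α : Type*} [Semiring α] {A : Matrix m m α}
    {B : Matrix m n α} {C : Matrix n m α} {D : Matrix n n α} {x : m → α} {y : n → α} {μ : α} :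
    fromBlocks A B C D *ᵥ Sum.elim x y = μ • Sum.elim x y ↔
      A *ᵥ x + B *ᵥ y = μ • x ∧ C *ᵥ x + D *ᵥ y = μ • y := by
  simp only [fromBlocks_mulVec, Sum.elim_comp_inl, Sum.elim_comp_inr, funext_iff, Sum.forall,
    Sum.elim_inl, Sum.elim_inr, Pi.smul_apply]

theorem PosDef.pos_of_mulVec_eq_smul {C : Matrix n n ℝ} (hC : C.PosDef) {x : n → ℝ} {μ : ℝ}
    (hx : x ≠ 0) (h : C *ᵥ x = μ • x) : 0 < μ := by
  have hpos := hC.dotProduct_mulVec_pos hx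
  rw [star_trivial, h, dotProduct_smul, smul_eq_mul] at hpos
  exact pos_of_mul_pos_left hpos (dotProduct_self_star_nonneg x)

theorem IsHermitian.mul_dotProduct_self_le_dotProduct_mulVec [DecidableEq n]
    {A : Matrix n n ℝ} (hA : A.IsHermitian) {μ : ℝ}
    (hμ : ∀ (ν : ℝ) (w : n → ℝ), w ≠ 0 → A *ᵥ w = ν • w → μ ≤ ν) (x : n → ℝ) :
    μ * (x ⬝ᵥ x) ≤ x ⬝ᵥ (A *ᵥ x) := by
  have hshift : (A - μ • 1).IsHermitian := hA.sub (isHermitian_one.smul (IsSelfAdjoint.all μ))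
  have hpsd : (A - μ • 1).PosSemidef := hshift.posSemidef_iff_eigenvalues_nonneg.mpr fun i => by
    have hw := hshift.mulVec_eigenvectorBasis i
    rw [sub_mulVec, smul_mulVec, one_mulVec, sub_eq_iff_eq_add, ← add_smul] at hw
    have hw0 : ⇑(hshift.eigenvectorBasis i) ≠ 0 := fun h =>
      hshift.eigenvectorBasis.orthonormal.ne_zero i (by ext j; exact congrFun h j)
    simpa using hμ _ _ hw0 hw
  have hquad := hpsd.dotProduct_mulVec_nonneg x
  rw [star_trivial, sub_mulVec, smul_mulVec, one_mulVec, dotProduct_sub, dotProduct_smul,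
    smul_eq_mul, sub_nonneg] at hquad
  exact hquad

theorem fst_ne_zero_of_mulVec_add_mulVec_eq_smul {K : Matrix n m ℝ} {C : Matrix n n ℝ}
    (hC : C.PosDef) {x : m → ℝ} {y : n → ℝ} {μ : ℝ} (hμ : μ ≤ 0) (hxy : Sum.elim x y ≠ 0)
    (h : K *ᵥ x + C *ᵥ y = μ • y) : x ≠ 0 := by
  rintro rfl
  have hy : y ≠ 0 := by
    rintro rfl
    exact hxy Sum.elim_zero_zero
  rw [mulVec_zero, zero_add] at h
  exact hμ.not_gt (hC.pos_of_mulVec_eq_smul hy h)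

section CommRing

variable {α : Type*} [CommRing α] [DecidableEq n]

theorem schur_mulVec_eq_smul_add {R : Matrix m m α} {B : Matrix m n α} {C : Matrix n n α}
    {x : m → α} {y : n → α} {μ : α} (h : R *ᵥ x + B *ᵥ y = μ • x) :
    (R - B * C⁻¹ * Bᵀ) *ᵥ x = μ • x + B *ᵥ (-(C⁻¹ *ᵥ (Bᵀ *ᵥ x)) - y) := by
  rw [sub_mulVec, eq_sub_of_add_eq h, mulVec_sub, mulVec_neg, ← mulVec_mulVec, ← mulVec_mulVec]
  abel

theorem neg_inv_mulVec_sub_eq_smul {B : Matrix m n α} {C : Matrix n n α} (hC : IsUnit C.det)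
    {x : m → α} {y : n → α} {μ : α} (h : Bᵀ *ᵥ x + C *ᵥ y = μ • y) :
    -(C⁻¹ *ᵥ (Bᵀ *ᵥ x)) - y = -μ • (C⁻¹ *ᵥ y) := by
  rw [eq_sub_of_add_eq h, mulVec_sub, mulVec_smul, mulVec_mulVec, nonsing_inv_mul C hC,
    one_mulVec, neg_smul]
  abel

end CommRing

variable [DecidableEq n]

theorem dotProduct_schur_correction_eq {B : Matrix m n ℝ} {C : Matrix n n ℝ} (hC : C.PosDef)
    {x : m → ℝ} {y : n → ℝ} {μ : ℝ} (h : Bᵀ *ᵥ x + C *ᵥ y = μ • y) :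
    x ⬝ᵥ (B *ᵥ (-(C⁻¹ *ᵥ (Bᵀ *ᵥ x)) - y)) = μ * (y ⬝ᵥ y) - μ ^ 2 * (y ⬝ᵥ (C⁻¹ *ᵥ y)) := by
  have hdet : IsUnit C.det := hC.det_pos.ne'.isUnit
  have hCT : Cᵀ = C := by rw [← conjTranspose_eq_transpose_of_trivial, hC.isHermitian.eq]
  have hCy : (C *ᵥ y) ⬝ᵥ (C⁻¹ *ᵥ y) = y ⬝ᵥ y := by
    rw [dotProduct_comm, dotProduct_mulVec, ← mulVec_transpose, hCT, mulVec_mulVec,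
      mul_nonsing_inv C hdet, one_mulVec]
  rw [neg_inv_mulVec_sub_eq_smul hdet h, mulVec_smul, dotProduct_smul, dotProduct_mulVec,
    ← mulVec_transpose, eq_sub_of_add_eq h, sub_dotProduct, smul_dotProduct, hCy, smul_eq_mul,
    smul_eq_mul]
  ring

theorem dotProduct_schur_correction_nonpos {B : Matrix m n ℝ} {C : Matrix n n ℝ}
    (hC : C.PosDef) {x : m → ℝ} {y : n → ℝ} {μ : ℝ} (hμ : μ ≤ 0)
    (h : Bᵀ *ᵥ x + C *ᵥ y = μ • y) :
    x ⬝ᵥ (B *ᵥ (-(C⁻¹ *ᵥ (Bᵀ *ᵥ x)) - y)) ≤ 0 := by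
  have hy : 0 ≤ y ⬝ᵥ y := by simpa using dotProduct_self_star_nonneg y
  have hCy : 0 ≤ y ⬝ᵥ (C⁻¹ *ᵥ y) := by simpa using hC.inv.posSemidef.dotProduct_mulVec_nonneg y
  rw [dotProduct_schur_correction_eq hC h]
  linarith [mul_nonpos_of_nonpos_of_nonneg hμ hy, mul_nonneg (sq_nonneg μ) hCy]

end Matrix

theorem rayleigh_quotient_bound_general {nr nc : ℕ}
    (R : Matrix (Fin nr) (Fin nr) ℝ) (B : Matrix (Fin nr) (Fin nc) ℝ)
    (C : Matrix (Fin nc) (Fin nc) ℝ)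
    (hR : R.IsSymm) (hC : C.PosDef)
    (lamAt lamCg : ℝ)
    (ur : Fin nr → ℝ) (uc : Fin nc → ℝ)
    (hAtNeg : lamAt < 0)
    (hunit : (Sum.elim ur uc) ⬝ᵥ (Sum.elim ur uc) = 1)
    (heig : (Matrix.fromBlocks R B Bᵀ C) *ᵥ (Sum.elim ur uc) =
      lamAt • Sum.elim ur uc)
    (hCgMin : ∀ (μ : ℝ) (w : Fin nr → ℝ), w ≠ 0 →
      (R - B * C⁻¹ * Bᵀ) *ᵥ w = μ • w → lamCg ≤ μ) :
    lamCg ≤ (ur ⬝ᵥ ((R - B * C⁻¹ * Bᵀ) *ᵥ ur)) / (ur ⬝ᵥ ur) ∧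
    (ur ⬝ᵥ ((R - B * C⁻¹ * Bᵀ) *ᵥ ur)) / (ur ⬝ᵥ ur) =
      lamAt + (ur ⬝ᵥ (B *ᵥ ((-(C⁻¹ *ᵥ (Bᵀ *ᵥ ur))) - uc))) / (ur ⬝ᵥ ur) ∧
    lamAt + (ur ⬝ᵥ (B *ᵥ ((-(C⁻¹ *ᵥ (Bᵀ *ᵥ ur))) - uc))) / (ur ⬝ᵥ ur) ≤ lamAt := by
  obtain ⟨hr, hc⟩ := fromBlocks_mulVec_sumElim_eq_smul_iff.mp heig
  have hu : Sum.elim ur uc ≠ 0 := fun h => by simp [h] at hunit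
  have hq : 0 < ur ⬝ᵥ ur := by
    simpa using dotProduct_self_star_pos_iff.mpr
      (fst_ne_zero_of_mulVec_add_mulVec_eq_smul hC hAtNeg.le hu hc)
  have hS : (R - B * C⁻¹ * Bᵀ).IsHermitian :=
    (isHermitian_iff_isSymm.mpr hR).sub (isHermitian_mul_mul_conjTranspose B hC.isHermitian.inv)
  have hdot : ur ⬝ᵥ ((R - B * C⁻¹ * Bᵀ) *ᵥ ur) =
      lamAt * (ur ⬝ᵥ ur) + ur ⬝ᵥ (B *ᵥ ((-(C⁻¹ *ᵥ (Bᵀ *ᵥ ur))) - uc)) := by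
    rw [schur_mulVec_eq_smul_add hr, dotProduct_add, dotProduct_smul, smul_eq_mul]
  refine ⟨(le_div_iff₀ hq).mpr (hS.mul_dotProduct_self_le_dotProduct_mulVec hCgMin ur), ?_, ?_⟩
  · rw [hdot, add_div, mul_div_cancel_right₀ _ hq.ne']
  · exact add_le_of_nonpos_right <|
      div_nonpos_of_nonpos_of_nonneg (dotProduct_schur_correction_nonpos hC hAtNeg.le hc) hq.le

/-- Rayleigh quotient bound:
`λ_cg ≤ (u_r ⬝ D_cg u_r)/‖u_r‖² = λ_at + (u_r ⬝ B(u_min - u_c))/‖u_r‖² ≤ λ_at`. -/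
theorem rayleigh_quotient_bound {nr nc : ℕ}
    (R : Matrix (Fin nr) (Fin nr) ℝ) (B : Matrix (Fin nr) (Fin nc) ℝ)
    (C : Matrix (Fin nc) (Fin nc) ℝ)
    (hR : R.IsSymm) (hC : C.PosDef)
    (lamAt lamCg : ℝ)
    (ur : Fin nr → ℝ) (uc : Fin nc → ℝ)
    (hAtNeg : lamAt < 0)
    (hunit : (Sum.elim ur uc) ⬝ᵥ (Sum.elim ur uc) = 1)
    (heig : (Matrix.fromBlocks R B Bᵀ C) *ᵥ (Sum.elim ur uc) =
      lamAt • Sum.elim ur uc)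
    (hAtOnly : ∀ (μ : ℝ) (w : Fin nr ⊕ Fin nc → ℝ), w ≠ 0 →
      (Matrix.fromBlocks R B Bᵀ C) *ᵥ w = μ • w → μ = lamAt ∨ 0 < μ)
    (hCgEig : ∃ w : Fin nr → ℝ, w ≠ 0 ∧ (R - B * C⁻¹ * Bᵀ) *ᵥ w = lamCg • w)
    (hCgMin : ∀ (μ : ℝ) (w : Fin nr → ℝ), w ≠ 0 →
      (R - B * C⁻¹ * Bᵀ) *ᵥ w = μ • w → lamCg ≤ μ) :
    lamCg ≤ (ur ⬝ᵥ ((R - B * C⁻¹ * Bᵀ) *ᵥ ur)) / (ur ⬝ᵥ ur) ∧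
    (ur ⬝ᵥ ((R - B * C⁻¹ * Bᵀ) *ᵥ ur)) / (ur ⬝ᵥ ur) =
      lamAt + (ur ⬝ᵥ (B *ᵥ ((-(C⁻¹ *ᵥ (Bᵀ *ᵥ ur))) - uc))) / (ur ⬝ᵥ ur) ∧
    lamAt + (ur ⬝ᵥ (B *ᵥ ((-(C⁻¹ *ᵥ (Bᵀ *ᵥ ur))) - uc))) / (ur ⬝ᵥ ur) ≤ lamAt :=
  rayleigh_quotient_bound_general R B C hR hC lamAt lamCg ur uc hAtNeg hunit heig hCgMin
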